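/- Let G be a connected graph on n vertices without isolated vertices and with domination number γ(G) = 1. Then for every p ∈ (0, (n+1)/(2n)], G is a universal γ_p-fixer; that is, γ_p(πG) = γ_p(G) for every permutation π of V(G). -/

import Mathlib

/-!
A vertex `v` with `N[v] = V(G)` is a `p`-dominating set of `G` for every `p ≤ 1`. In the prism
`πG` its copy in `G₁` dominates all of `G₁` together with `π(v)` in `G₂`, that is `n + 1` of the
`2n` vertices, so it is `p`-dominating for `p ≤ (n + 1)/(2n)`. Since `p > 0` the empty set is
never `p`-dominating, hence both `p`-domination numbers equal `1`.
-/

open SimpleGraph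

/-- Closed neighborhood of a set of vertices. -/
def closedNbhd {V : Type*} (G : SimpleGraph V) (S : Set V) : Set V :=
  {v | v ∈ S ∨ ∃ u ∈ S, G.Adj u v}

/-- `S` is a `p`-dominating set of `G`. -/
def IsPDomSet {V : Type*} [Fintype V] (G : SimpleGraph V) (p : ℝ) (S : Set V) : Prop :=
  p ≤ (closedNbhd G S).ncard / (Fintype.card V : ℝ)

/-- The `p`-domination number of `G`. -/
noncomputable def pDomNum {V : Type*} [Fintype V] (G : SimpleGraph V) (p : ℝ) : ℕ :=
  sInf {k | ∃ S : Set V, IsPDomSet G p S ∧ S.ncard = k}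

/-- `S` is a dominating set of `G`. -/
def IsDomSet {V : Type*} (G : SimpleGraph V) (S : Set V) : Prop :=
  ∀ v, v ∈ closedNbhd G S

/-- The domination number of `G`. -/
noncomputable def domNum {V : Type*} (G : SimpleGraph V) : ℕ :=
  sInf {k | ∃ S : Set V, IsDomSet G S ∧ S.ncard = k}

/-- The prism of `G` with respect to a permutation `π`. -/
def prism {V : Type*} (G : SimpleGraph V) (π : Equiv.Perm V) : SimpleGraph (V ⊕ V) where
  Adj x y := match x, y with
    | .inl a, .inl b => G.Adj a b
    | .inr a, .inr b => G.Adj a b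
    | .inl a, .inr b => π a = b
    | .inr a, .inl b => π b = a
  symm := ⟨by rintro (a|a) (b|b) h <;> simp_all [SimpleGraph.adj_comm]⟩
  loopless := ⟨by rintro (a|a) h <;> simp_all⟩

section ClosedNbhd

variable {V : Type*} (G : SimpleGraph V)

@[simp]
lemma closedNbhd_empty : closedNbhd G ∅ = ∅ := by
  ext x
  simp [closedNbhd]

lemma mem_closedNbhd_singleton {v w : V} : w ∈ closedNbhd G {v} ↔ w = v ∨ G.Adj v w := by
  simp [closedNbhd]

lemma exists_closedNbhd_singleton_eq_univ_of_domNum_eq_one (hγ : domNum G = 1) :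
    ∃ v, closedNbhd G {v} = Set.univ := by
  have hmem : domNum G ∈ {k | ∃ S : Set V, IsDomSet G S ∧ S.ncard = k} :=
    Nat.sInf_mem (Nat.nonempty_of_pos_sInf (show 0 < domNum G by omega))
  obtain ⟨S, hS, hS1⟩ := hγ ▸ hmem
  obtain ⟨v, rfl⟩ := Set.ncard_eq_one.mp hS1
  exact ⟨v, Set.eq_univ_of_forall hS⟩

lemma closedNbhd_prism_inl (π : Equiv.Perm V) (v : V) :
    closedNbhd (prism G π) {Sum.inl v} = Sum.inl '' closedNbhd G {v} ∪ {Sum.inr (π v)} := by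
  ext (a | a) <;> simp [mem_closedNbhd_singleton, prism, eq_comm]

lemma ncard_closedNbhd_prism_inl [Finite V] (π : Equiv.Perm V) (v : V) :
    (closedNbhd (prism G π) {Sum.inl v}).ncard = (closedNbhd G {v}).ncard + 1 := by
  rw [closedNbhd_prism_inl, Set.ncard_union_eq (by simp) (Set.toFinite _) (Set.toFinite _),
    Set.ncard_image_of_injective _ Sum.inl_injective, Set.ncard_singleton]

end ClosedNbhd

lemma pDomNum_eq_one {V : Type*} [Fintype V] (G : SimpleGraph V) {p : ℝ} (hp : 0 < p) {v : V}
    (hv : IsPDomSet G p {v}) : pDomNum G p = 1 := by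
  have hmem : 1 ∈ {k | ∃ S : Set V, IsPDomSet G p S ∧ S.ncard = k} :=
    ⟨{v}, hv, Set.ncard_singleton v⟩
  refine le_antisymm (Nat.sInf_le hmem) (Nat.one_le_iff_ne_zero.mpr fun h0 => ?_)
  have hmem0 : pDomNum G p ∈ {k | ∃ S : Set V, IsPDomSet G p S ∧ S.ncard = k} :=
    Nat.sInf_mem ⟨1, hmem⟩
  obtain ⟨S, hS, hS0⟩ := h0 ▸ hmem0
  rw [(Set.ncard_eq_zero (Set.toFinite S)).mp hS0, IsPDomSet, closedNbhd_empty] at hS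
  simp only [Set.ncard_empty, CharP.cast_eq_zero, zero_div] at hS
  linarith

theorem stmt2_general {V : Type*} [Fintype V] (G : SimpleGraph V) (n : ℕ)
    (hn : Fintype.card V = n)
    (hγ : domNum G = 1)
    (p : ℝ) (hp0 : 0 < p) (hp1 : p ≤ ((n : ℝ) + 1) / (2 * n)) :
    ∀ π : Equiv.Perm V, pDomNum (prism G π) p = pDomNum G p := by
  intro π
  obtain ⟨v, hv⟩ := exists_closedNbhd_singleton_eq_univ_of_domNum_eq_one G hγ
  have hn1 : (1 : ℝ) ≤ n := by exact_mod_cast hn ▸ Fintype.card_pos_iff.mpr ⟨v⟩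
  have hcard : ((closedNbhd G {v}).ncard : ℝ) = n := by
    rw [hv, Set.ncard_univ, Nat.card_eq_fintype_card, hn]
  have hG : IsPDomSet G p {v} := by
    rw [IsPDomSet, hcard, hn, div_self (by positivity)]
    exact hp1.trans ((div_le_one (by positivity)).mpr (by linarith))
  have hprism : IsPDomSet (prism G π) p {Sum.inl v} := by
    rw [IsPDomSet, ncard_closedNbhd_prism_inl, Fintype.card_sum, hn]
    push_cast
    rwa [hcard, ← two_mul]
  rw [pDomNum_eq_one G hp0 hG, pDomNum_eq_one _ hp0 hprism]

theorem stmt2 {V : Type*} [Fintype V] (G : SimpleGraph V) (n : ℕ)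
    (hn : Fintype.card V = n)
    (hconn : G.Connected)
    (hiso : ∀ v : V, ∃ u : V, G.Adj u v)
    (hγ : domNum G = 1)
    (p : ℝ) (hp0 : 0 < p) (hp1 : p ≤ ((n : ℝ) + 1) / (2 * n)) :
    ∀ π : Equiv.Perm V, pDomNum (prism G π) p = pDomNum G p :=
  stmt2_general G n hn hγ p hp0 hp1
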